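/- arXiv:0706.2464 — 3 statements merged into one kernel-verified Lean document; each statement's English description precedes it below -/
import Mathlib

section
/- The dBKP polynomial Q(f) = (f100 - f001)(f010 - f111)(f101 - f110)(f011 - f000) - (f001 - f010)(f111 - f100)(f000 - f101)(f110 - f011) is invariant (up to a nonzero multiplicative factor) under simultaneous Möbius transformations of all vertex variables: if each f_{ijk} is replaced by (a·f_{ijk} + b)/(c·f_{ijk} + d) with ad - bc ≠ 0, then the resulting rational function equals (ad - bc)^4 · Q(f) / Π_{ijk}(c·f_{ijk} + d). In particular for translations (f ↦ f + b), scalings (f ↦ a·f, a ≠ 0), and inversion (f ↦ 1/f, clearing denominators), the zero set of Q is preserved. -/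
/-!
A Möbius map `x ↦ (a x + b) / (c x + d)` multiplies every difference `x - y` by
`(a d - b c) / ((c x + d) (c y + d))`. Each of the two monomials of `Q` is a product of four
differences whose eight entries are exactly the eight vertices of the cube, so both pick up the
same factor `(a d - b c) ^ 4 / ∏ᵥ (c f v + d)`, and hence so does `Q`.
-/

/-- the dBKP expression evaluated at values attached to the cube vertices -/
def QdFun {R : Type*} [CommRing R] (f : Fin 2 × Fin 2 × Fin 2 → R) : R :=
  (f (1,0,0) - f (0,0,1)) * (f (0,1,0) - f (1,1,1)) * (f (1,0,1) - f (1,1,0)) *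
    (f (0,1,1) - f (0,0,0))
  - (f (0,0,1) - f (0,1,0)) * (f (1,1,1) - f (1,0,0)) * (f (0,0,0) - f (1,0,1)) *
    (f (1,1,0) - f (0,1,1))

section Mobius

variable {K : Type*} [Field K] (a b c d : K)

theorem mobius_sub_mobius {x y : K} (hx : c * x + d ≠ 0) (hy : c * y + d ≠ 0) :
    (a * x + b) / (c * x + d) - (a * y + b) / (c * y + d) =
      (a * d - b * c) * (x - y) / ((c * x + d) * (c * y + d)) := by
  rw [div_sub_div _ _ hx hy]
  ring

theorem mobius_sub_mul_four {x₁ y₁ x₂ y₂ x₃ y₃ x₄ y₄ : K}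
    (hx₁ : c * x₁ + d ≠ 0) (hy₁ : c * y₁ + d ≠ 0) (hx₂ : c * x₂ + d ≠ 0) (hy₂ : c * y₂ + d ≠ 0)
    (hx₃ : c * x₃ + d ≠ 0) (hy₃ : c * y₃ + d ≠ 0) (hx₄ : c * x₄ + d ≠ 0) (hy₄ : c * y₄ + d ≠ 0) :
    ((a * x₁ + b) / (c * x₁ + d) - (a * y₁ + b) / (c * y₁ + d)) *
        ((a * x₂ + b) / (c * x₂ + d) - (a * y₂ + b) / (c * y₂ + d)) *
        ((a * x₃ + b) / (c * x₃ + d) - (a * y₃ + b) / (c * y₃ + d)) *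
        ((a * x₄ + b) / (c * x₄ + d) - (a * y₄ + b) / (c * y₄ + d)) =
      (a * d - b * c) ^ 4 * ((x₁ - y₁) * (x₂ - y₂) * (x₃ - y₃) * (x₄ - y₄)) /
        ((c * x₁ + d) * (c * y₁ + d) * (c * x₂ + d) * (c * y₂ + d) *
          (c * x₃ + d) * (c * y₃ + d) * (c * x₄ + d) * (c * y₄ + d)) := by
  rw [mobius_sub_mobius a b c d hx₁ hy₁, mobius_sub_mobius a b c d hx₂ hy₂,
    mobius_sub_mobius a b c d hx₃ hy₃, mobius_sub_mobius a b c d hx₄ hy₄,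
    div_mul_div_comm, div_mul_div_comm, div_mul_div_comm]
  congr 1 <;> ring

end Mobius

theorem prod_cube_eq {M : Type*} [CommMonoid M] (g : Fin 2 × Fin 2 × Fin 2 → M) :
    ∏ v, g v = g (0,0,0) * g (0,0,1) * g (0,1,0) * g (0,1,1) *
      g (1,0,0) * g (1,0,1) * g (1,1,0) * g (1,1,1) := by
  simp only [Fintype.prod_prod_type, Fin.prod_univ_two]
  ac_rfl

theorem QdFun_mobius {K : Type*} [Field K] (a b c d : K) {f : Fin 2 × Fin 2 × Fin 2 → K}
    (hden : ∀ v, c * f v + d ≠ 0) :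
    QdFun (fun v => (a * f v + b) / (c * f v + d)) =
      (a * d - b * c) ^ 4 * QdFun f / ∏ v, (c * f v + d) := by
  simp only [QdFun]
  rw [mobius_sub_mul_four a b c d (hden _) (hden _) (hden _) (hden _) (hden _) (hden _)
      (hden _) (hden _),
    mobius_sub_mul_four a b c d (hden _) (hden _) (hden _) (hden _) (hden _) (hden _)
      (hden _) (hden _),
    prod_cube_eq]
  ring

theorem stmt7_general {K : Type*} [Field K]
    (a b c d : K) (f : Fin 2 × Fin 2 × Fin 2 → K)
    (hdet : a * d - b * c ≠ 0) (hden : ∀ v, c * f v + d ≠ 0) :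
    QdFun (fun v => (a * f v + b) / (c * f v + d)) =
      (a * d - b * c) ^ 4 * QdFun f / ∏ v : Fin 2 × Fin 2 × Fin 2, (c * f v + d) ∧
    (QdFun (fun v => (a * f v + b) / (c * f v + d)) = 0 ↔ QdFun f = 0) := by
  have hprod : ∏ v, (c * f v + d) ≠ 0 := Finset.prod_ne_zero_iff.mpr fun v _ => hden v
  refine ⟨QdFun_mobius a b c d hden, ?_⟩
  rw [QdFun_mobius a b c d hden, div_eq_zero_iff, mul_eq_zero]
  simp [hprod, hdet]

theorem stmt7 {K : Type*} [Field K] [CharZero K]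
    (a b c d : K) (f : Fin 2 × Fin 2 × Fin 2 → K)
    (hdet : a * d - b * c ≠ 0) (hden : ∀ v, c * f v + d ≠ 0) :
    QdFun (fun v => (a * f v + b) / (c * f v + d)) =
      (a * d - b * c) ^ 4 * QdFun f / ∏ v : Fin 2 × Fin 2 × Fin 2, (c * f v + d) ∧
    (QdFun (fun v => (a * f v + b) / (c * f v + d)) = 0 ↔ QdFun f = 0) :=
  stmt7_general a b c d f hdet hden
end

section
/- The 3-dimensional face equation Q^{(3)} = (f001 + f010 + f100 + f111) - σ·(f000 + f011 + f101 + f110) = 0 with σ = ±1 is 4d-consistent: imposing it on the four initial 3d-faces of the unit 4-cube (each determining one of f0111, f1011, f1101, f1110 linearly from the other vertices of that face) and then on the four final 3d-faces, the four resulting expressions for f1111 in terms of the eleven independent initial variables all coincide. -/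
/-- 4d-consistency of the additive face equation
    (f001+f010+f100+f111) - σ(f000+f011+f101+f110) = 0, σ = ±1. -/
theorem stmt13 {K : Type*} [Field K] [CharZero K] (σ : K) (hσ : σ = 1 ∨ σ = -1)
    (f0000 f0001 f0010 f0100 f1000 f0011 f0101 f0110 f1001 f1010 f1100 : K) :
    -- solving the four initial (x_k = 0) face equations:
    let f0111 := σ * (f0000 + f0011 + f0101 + f0110) - f0001 - f0010 - f0100
    let f1011 := σ * (f0000 + f0011 + f1001 + f1010) - f0001 - f0010 - f1000
    let f1101 := σ * (f0000 + f0101 + f1001 + f1100) - f0001 - f0100 - f1000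
    let f1110 := σ * (f0000 + f0110 + f1010 + f1100) - f0010 - f0100 - f1000
    -- the four values of f1111 from the final (x_k = 1) face equations coincide:
    (σ * (f1000 + f1011 + f1101 + f1110) - f1001 - f1010 - f1100 =
       σ * (f0100 + f0111 + f1101 + f1110) - f0101 - f0110 - f1100) ∧
    (σ * (f1000 + f1011 + f1101 + f1110) - f1001 - f1010 - f1100 =
       σ * (f0010 + f0111 + f1011 + f1110) - f0011 - f0110 - f1010) ∧
    (σ * (f1000 + f1011 + f1101 + f1110) - f1001 - f1010 - f1100 =
       σ * (f0001 + f0111 + f1011 + f1101) - f0011 - f0101 - f1001) := by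
  obtain h | h := hσ <;> subst h <;> refine ⟨by ring, by ring, by ring⟩
end

section
/- The 3-dimensional face equation Q^{(2)} = f001·f010·f100·f111 - σ·f000·f011·f101·f110 = 0 with σ = ±1, imposed on nonzero field elements, is 4d-consistent: solving the four initial 3d-face equations of the unit 4-cube for f0111, f1011, f1101, f1110 and substituting into the four final 3d-face equations yields four identical expressions for f1111 as a rational function of the eleven independent initial variables. -/
set_option maxHeartbeats 1000000


/-- 4d-consistency of the multiplicative face equation
    f001·f010·f100·f111 = σ·f000·f011·f101·f110, σ = ±1. -/
theorem stmt14 {K : Type*} [Field K] (σ : K) (hσ : σ = 1 ∨ σ = -1)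
    (f0000 f0001 f0010 f0100 f1000 f0011 f0101 f0110 f1001 f1010 f1100 : K)
    (h0000 : f0000 ≠ 0) (h0001 : f0001 ≠ 0) (h0010 : f0010 ≠ 0)
    (h0100 : f0100 ≠ 0) (h1000 : f1000 ≠ 0) (h0011 : f0011 ≠ 0)
    (h0101 : f0101 ≠ 0) (h0110 : f0110 ≠ 0) (h1001 : f1001 ≠ 0)
    (h1010 : f1010 ≠ 0) (h1100 : f1100 ≠ 0) :
    -- solving the four initial (x_k = 0) face equations:
    let f0111 := σ * (f0000 * f0011 * f0101 * f0110) / (f0001 * f0010 * f0100)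
    let f1011 := σ * (f0000 * f0011 * f1001 * f1010) / (f0001 * f0010 * f1000)
    let f1101 := σ * (f0000 * f0101 * f1001 * f1100) / (f0001 * f0100 * f1000)
    let f1110 := σ * (f0000 * f0110 * f1010 * f1100) / (f0010 * f0100 * f1000)
    -- the four values of f1111 from the final (x_k = 1) face equations coincide:
    (σ * (f1000 * f1011 * f1101 * f1110) / (f1001 * f1010 * f1100) =
       σ * (f0100 * f0111 * f1101 * f1110) / (f0101 * f0110 * f1100)) ∧
    (σ * (f1000 * f1011 * f1101 * f1110) / (f1001 * f1010 * f1100) =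
       σ * (f0010 * f0111 * f1011 * f1110) / (f0011 * f0110 * f1010)) ∧
    (σ * (f1000 * f1011 * f1101 * f1110) / (f1001 * f1010 * f1100) =
       σ * (f0001 * f0111 * f1011 * f1101) / (f0011 * f0101 * f1001)) := by
  intro f0111 f1011 f1101 f1110
  simp only [f0111, f1011, f1101, f1110]
  rcases hσ with h | h <;> subst h <;>
    refine ⟨?_, ?_, ?_⟩ <;> field_simp <;>
      rw [div_eq_div_iff (by simp [*]) (by simp [*])] <;> ring
end
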